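/- For all real numbers p, q, p_s, p_s^e, the following polynomial identity holds: B² C² + A C (A E − B D) = p² q² p_s p_s^e (p+q)⁴ (p+q−1)² (p_s − p_s^e)² (p_s + p_s^e − p_s p_s^e)² · [p_s + (p+q) p_s^e (1 − p_s)] · [p_s^e + p_s (2 − p − q)(1 − p_s^e)]. -/
import Mathlib


noncomputable section

/-- A = p q [p_s² (1−p_s^e)(p+q−2) + (p_s^e)² (1−p_s)(p+q)] -/
def Acoef (p q ps pse : ℝ) : ℝ :=
  p * q * (ps ^ 2 * (1 - pse) * (p + q - 2) + pse ^ 2 * (1 - ps) * (p + q))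
/-- B = p q (p+q)(2 p_s p_s^e − p_s − p_s^e) -/
def Bcoef (p q ps pse : ℝ) : ℝ := p * q * (p + q) * (2 * ps * pse - ps - pse)
/-- C = (p_s p_s^e − p_s − p_s^e) p_s p_s^e (p+q−1)² (p+q) -/
def Ccoef (p q ps pse : ℝ) : ℝ :=
  (ps * pse - ps - pse) * ps * pse * (p + q - 1) ^ 2 * (p + q)
/-- D = (p_s p_s^e − p_s − p_s^e)(p_s + p_s^e)(1−p−q)(p+q)² -/
def Dcoef (p q ps pse : ℝ) : ℝ :=
  (ps * pse - ps - pse) * (ps + pse) * (1 - p - q) * (p + q) ^ 2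
/-- E = (p_s p_s^e − p_s − p_s^e)(p+q)³ -/
def Ecoef (p q ps pse : ℝ) : ℝ := (ps * pse - ps - pse) * (p + q) ^ 3

/-- Polynomial factorization of the discriminant Δ. -/
theorem stmt5 (p q ps pse : ℝ) :
    Bcoef p q ps pse ^ 2 * Ccoef p q ps pse ^ 2 +
      Acoef p q ps pse * Ccoef p q ps pse *
        (Acoef p q ps pse * Ecoef p q ps pse - Bcoef p q ps pse * Dcoef p q ps pse) =
    p ^ 2 * q ^ 2 * ps * pse * (p + q) ^ 4 * (p + q - 1) ^ 2 * (ps - pse) ^ 2 *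
      (ps + pse - ps * pse) ^ 2 *
      (ps + (p + q) * pse * (1 - ps)) * (pse + ps * (2 - p - q) * (1 - pse)) := by
  unfold Acoef Bcoef Ccoef Dcoef Ecoef; ring
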